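/- arXiv:2003.12922 — 4 statements merged into one kernel-verified Lean document; each statement's English description precedes it below -/
import Mathlib

section
/- Let G be a finite simple graph with maximum degree Δ(G) ≥ 4. Then pn(E_c(G)) ≥ ⌈Δ(G)/2⌉, where E_c(G) is the complete expansion graph of G and pn denotes the pagenumber. -/
/-!
If `v` has maximum degree `Δ`, the incidence pairs `(v, e)` form a clique `K_Δ` in `E_c(G)`,
and book embeddings restrict to subgraphs, so it suffices to show that a `k`-page book
embedding of `K_d`, `d ≥ 4`, has `d ≤ 2k`. Number the vertices `0, …, d-1` along the spine.
Each of the `d(d-3)/2` pairs `(i, j)` with `i + 2 ≤ j`, other than `(0, d-1)`, is separated by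
`i + 1`, so it lies on a page. The pairs on one page, together with `(0, d-1)`, are noncrossing
arcs of length at least two, of which there are at most `d - 2` (split at the longest arc from
the left end). Hence `d(d-3)/2 ≤ k(d-3)`.
-/

open SimpleGraph

/-- The vertex type of the complete expansion graph of `G`: incidence pairs `(v, e)`
with `e` an edge of `G` and `v` an endpoint of `e`. -/
abbrev IncidencePair {V : Type*} (G : SimpleGraph V) : Type _ :=
  {p : V × Sym2 V // p.2 ∈ G.edgeSet ∧ p.1 ∈ p.2}

/-- The complete expansion graph `E_c(G)` of a simple graph `G`: vertices are the incidence
pairs `(v, e)` of `G`, and two distinct pairs `(v, e)`, `(w, f)` are adjacent iff `v = w`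
or `e = f`. -/
def completeExpansion {V : Type*} (G : SimpleGraph V) : SimpleGraph (IncidencePair G) :=
  SimpleGraph.fromRel (fun x y =>
    (x : V × Sym2 V).1 = (y : V × Sym2 V).1 ∨ (x : V × Sym2 V).2 = (y : V × Sym2 V).2)

/-- With vertices placed on the spine at positions `f`, the edges `e = {a,b}` and
`e' = {c,d}` cross iff (for suitable representations) `f a < f c < f b < f d`. -/
def edgesCross {V : Type*} (f : V → ℕ) (e e' : Sym2 V) : Prop :=
  ∃ a b c d : V, e = s(a, b) ∧ e' = s(c, d) ∧ f a < f c ∧ f c < f b ∧ f b < f d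

/-- `G` admits a `k`-page book embedding: the vertices are linearly ordered along the spine
(via an injection into `ℕ`), every edge is either drawn on the spine (`none`, which is only
possible for an edge joining two consecutive vertices of the spine) or assigned to one of
`k` pages, and two edges assigned to the same page never cross. -/
def HasBookEmbedding {V : Type*} (G : SimpleGraph V) (k : ℕ) : Prop :=
  ∃ (f : V → ℕ) (page : G.edgeSet → Option (Fin k)),
    Function.Injective f ∧
    (∀ e : G.edgeSet, page e = none →
      ∃ a b : V, (e : Sym2 V) = s(a, b) ∧ f a < f b ∧ ∀ c : V, ¬(f a < f c ∧ f c < f b)) ∧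
    (∀ e e' : G.edgeSet, (page e).isSome → page e = page e' →
      ¬ edgesCross f (e : Sym2 V) (e' : Sym2 V))

/-- The pagenumber of `G`: the least number of pages of a book embedding of `G`. -/
noncomputable def pageNumber {V : Type*} (G : SimpleGraph V) : ℕ :=
  sInf {k | HasBookEmbedding G k}

open Finset

section BookEmbedding

variable {V W : Type*} {k : ℕ}

structure IsBookEmbedding (G : SimpleGraph V) (f : V → ℕ)
    (page : G.edgeSet → Option (Fin k)) : Prop where
  injective : Function.Injective f
  spine_edge : ∀ e : G.edgeSet, page e = none →
    ∃ a b : V, (e : Sym2 V) = s(a, b) ∧ f a < f b ∧ ∀ c : V, ¬(f a < f c ∧ f c < f b)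
  noncrossing : ∀ e e' : G.edgeSet, (page e).isSome → page e = page e' →
    ¬ edgesCross f (e : Sym2 V) (e' : Sym2 V)

lemma hasBookEmbedding_iff {G : SimpleGraph V} :
    HasBookEmbedding G k ↔ ∃ f page, IsBookEmbedding (k := k) G f page :=
  ⟨fun ⟨f, page, h₁, h₂, h₃⟩ => ⟨f, page, h₁, h₂, h₃⟩,
    fun ⟨f, page, h₁, h₂, h₃⟩ => ⟨f, page, h₁, h₂, h₃⟩⟩

lemma not_edgesCross_self (f : V → ℕ) (e : Sym2 V) : ¬ edgesCross f e e := by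
  rintro ⟨a, b, c, d, rfl, h, hac, hcb, hbd⟩
  rcases Sym2.eq_iff.mp h with ⟨rfl, rfl⟩ | ⟨rfl, rfl⟩ <;> omega

lemma edgesCross.of_comp {f : V → ℕ} (φ : W → V) {e e' : Sym2 W}
    (h : edgesCross (f ∘ φ) e e') : edgesCross f (e.map φ) (e'.map φ) := by
  obtain ⟨a, b, c, d, rfl, rfl, h⟩ := h
  exact ⟨φ a, φ b, φ c, φ d, rfl, rfl, h⟩

lemma IsBookEmbedding.comap {G : SimpleGraph V} {H : SimpleGraph W} {f : V → ℕ}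
    {page : G.edgeSet → Option (Fin k)} (h : IsBookEmbedding G f page) (φ : Copy H G) :
    IsBookEmbedding H (f ∘ φ) (page ∘ φ.mapEdgeSet) where
  injective := h.injective.comp φ.injective
  spine_edge := by
    rintro ⟨e, he⟩ hnone
    obtain ⟨a, b, hab, hlt, hgap⟩ := h.spine_edge _ hnone
    induction e using Sym2.ind with
    | _ x y =>
    rcases Sym2.eq_iff.mp hab with ⟨rfl, rfl⟩ | ⟨rfl, rfl⟩
    · exact ⟨x, y, rfl, hlt, fun c => hgap (φ c)⟩
    · exact ⟨y, x, Sym2.eq_swap, hlt, fun c => hgap (φ c)⟩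
  noncrossing e e' hsome heq hcross :=
    h.noncrossing _ _ hsome heq (hcross.of_comp φ)

lemma exists_hasBookEmbedding [Finite V] (G : SimpleGraph V) : ∃ k, HasBookEmbedding G k := by
  obtain ⟨f, hf⟩ := exists_injective_nat V
  let label := Finite.equivFin G.edgeSet
  refine ⟨_, hasBookEmbedding_iff.mpr
    ⟨f, fun e => some (label e), hf, fun e he => ?_, fun e e' _ heq => ?_⟩⟩
  · exact absurd he (Option.some_ne_none _)
  · obtain rfl := label.injective (Option.some_injective _ heq)
    exact not_edgesCross_self f e

lemma HasBookEmbedding.mono {G : SimpleGraph V} {H : SimpleGraph W} (h : HasBookEmbedding G k)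
    (hHG : H ⊑ G) : HasBookEmbedding H k := by
  obtain ⟨f, page, hfp⟩ := hasBookEmbedding_iff.mp h
  obtain ⟨φ⟩ := hHG
  exact hasBookEmbedding_iff.mpr ⟨_, _, hfp.comap φ⟩

end BookEmbedding

def Noncrossing (F : Finset (ℕ × ℕ)) : Prop :=
  ∀ p ∈ F, ∀ q ∈ F, ¬(p.1 < q.1 ∧ q.1 < p.2 ∧ p.2 < q.2)

lemma Noncrossing.mono {F F' : Finset (ℕ × ℕ)} (hF : Noncrossing F) (h : F' ⊆ F) :
    Noncrossing F' :=
  fun p hp q hq => hF p (h hp) q (h hq)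

lemma Noncrossing.insert_outer {F : Finset (ℕ × ℕ)} (hF : Noncrossing F) {b : ℕ}
    (hb : ∀ p ∈ F, p.2 ≤ b) : Noncrossing (insert (0, b) F) := by
  intro p hp q hq
  rcases mem_insert.mp hp with rfl | hp <;> rcases mem_insert.mp hq with rfl | hq
  · simp
  · have := hb q hq
    omega
  · simp
  · exact hF p hp q hq

lemma Noncrossing.card_filter_le {F : Finset (ℕ × ℕ)} (hF : Noncrossing F)
    (hlong : ∀ p ∈ F, p.1 + 2 ≤ p.2) {a b : ℕ} (hab : a < b) :
    #{p ∈ F | a ≤ p.1 ∧ p.2 ≤ b} ≤ b - a - 1 := by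
  induction hn : b - a using Nat.strong_induction_on generalizing a b with
  | _ n ih =>
  subst hn
  obtain rfl | hab' := eq_or_lt_of_le (Nat.succ_le_of_lt hab)
  · have hempty : {p ∈ F | a ≤ p.1 ∧ p.2 ≤ a + 1} = ∅ :=
      filter_eq_empty_iff.mpr fun p hp h => by have := hlong p hp; omega
    simp [hempty]
  rcases (F.filter fun p => p.1 = a ∧ p.2 < b).eq_empty_or_nonempty with hA | hA
  · have hsub : {p ∈ F | a ≤ p.1 ∧ p.2 ≤ b} ⊆
        insert (a, b) {p ∈ F | a + 1 ≤ p.1 ∧ p.2 ≤ b} := by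
      intro p hp
      simp only [mem_filter] at hp
      rw [mem_insert, mem_filter]
      by_cases hpa : p.1 = a
      · by_cases hpb : p.2 = b
        · exact Or.inl (Prod.ext hpa hpb)
        · exact absurd (mem_filter.mpr ⟨hp.1, hpa, by omega⟩)
            (eq_empty_iff_forall_notMem.mp hA p)
      · exact Or.inr ⟨hp.1, by omega, hp.2.2⟩
    calc _ ≤ _ := card_le_card hsub
      _ ≤ #{p ∈ F | a + 1 ≤ p.1 ∧ p.2 ≤ b} + 1 := card_insert_le _ _
      _ ≤ b - (a + 1) - 1 + 1 := by gcongr; exact ih _ (by omega) hab' rfl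
      _ ≤ b - a - 1 := by omega
  · -- the longest arc `(a, c)` from `a` other than `(a, b)` splits `[a, b]` at `c`
    obtain ⟨⟨a', c⟩, hc, hmax⟩ := exists_max_image _ Prod.snd hA
    obtain ⟨hcF, rfl, hcb⟩ := mem_filter.mp hc
    have hac := hlong _ hcF
    have hsub : {p ∈ F | a' ≤ p.1 ∧ p.2 ≤ b} ⊆ insert (a', b)
        ({p ∈ F | a' ≤ p.1 ∧ p.2 ≤ c} ∪ {p ∈ F | c ≤ p.1 ∧ p.2 ≤ b}) := by
      intro p hp
      simp only [mem_filter] at hp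
      simp only [mem_insert, mem_union, mem_filter]
      by_cases hpc : p.2 ≤ c
      · exact Or.inr (Or.inl ⟨hp.1, hp.2.1, hpc⟩)
      by_cases hcp : c ≤ p.1
      · exact Or.inr (Or.inr ⟨hp.1, hcp, hp.2.2⟩)
      by_cases hpa : p.1 = a'
      · by_cases hpb : p.2 = b
        · exact Or.inl (Prod.ext hpa hpb)
        · have := hmax p (mem_filter.mpr ⟨hp.1, hpa, by omega⟩)
          omega
      · exact absurd ⟨by omega, by omega, by omega⟩ (hF _ hcF p hp.1)
    simp only at hac hcb
    calc _ ≤ _ := card_le_card hsub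
      _ ≤ #{p ∈ F | a' ≤ p.1 ∧ p.2 ≤ c} + #{p ∈ F | c ≤ p.1 ∧ p.2 ≤ b} + 1 :=
          (card_insert_le _ _).trans (by gcongr; exact card_union_le _ _)
      _ ≤ (c - a' - 1) + (b - c - 1) + 1 := by
          gcongr
          · exact ih _ (by omega) (by omega) rfl
          · exact ih _ (by omega) hcb rfl
      _ = b - a' - 1 := by omega

def chords (d : ℕ) : Finset (ℕ × ℕ) :=
  {p ∈ range d ×ˢ range d | p.1 + 2 ≤ p.2}

lemma two_mul_card_chords (d : ℕ) : 2 * #(chords d) = (d - 1) * (d - 2) := by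
  induction d with
  | zero => rfl
  | succ d ih =>
    have hsplit : chords (d + 1) = chords d ∪ (range (d - 1)).image (·, d) := by
      ext ⟨i, j⟩
      simp only [chords, mem_filter, mem_product, mem_range, mem_union, mem_image, Prod.mk.injEq]
      constructor
      · intro h
        by_cases hj : j = d
        · exact Or.inr ⟨i, by omega, rfl, hj.symm⟩
        · exact Or.inl (by omega)
      · rintro (h | ⟨i', hi', rfl, rfl⟩) <;> omega
    have hdisj : Disjoint (chords d) ((range (d - 1)).image (·, d)) := by
      simp only [Finset.disjoint_left, chords, mem_filter, mem_product, mem_range, mem_image]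
      rintro _ h ⟨i, -, rfl⟩
      omega
    rw [hsplit, card_union_of_disjoint hdisj,
      card_image_of_injective _ fun _ _ h => by simpa using h, card_range, mul_add, ih]
    rcases d with _ | _ | d
    · rfl
    · rfl
    · show (d + 1) * d + 2 * (d + 1) = (d + 2) * (d + 1)
      ring

lemma card_le_of_noncrossing_of_subset_chords {d : ℕ} {F : Finset (ℕ × ℕ)}
    (hF : Noncrossing F) (hsub : F ⊆ (chords d).erase (0, d - 1)) : #F ≤ d - 3 := by
  have hchord : ∀ p ∈ F, p.1 + 2 ≤ p.2 ∧ p.2 < d ∧ p ≠ (0, d - 1) := fun p hp => by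
    obtain ⟨hne, hp⟩ := mem_erase.mp (hsub hp)
    simp only [chords, mem_filter, mem_product, mem_range] at hp
    exact ⟨hp.2, hp.1.2, hne⟩
  rcases F.eq_empty_or_nonempty with rfl | ⟨p, hp⟩
  · simp
  have hd : 3 ≤ d := by have := hchord p hp; omega
  have hout : (0, d - 1) ∉ F := fun h => (hchord _ h).2.2 rfl
  have harc : ∀ p ∈ insert (0, d - 1) F, p.1 + 2 ≤ p.2 ∧ p.2 ≤ d - 1 := by
    intro p hp
    rcases mem_insert.mp hp with rfl | hp
    · simp only
      omega
    · have := hchord p hp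
      omega
  have hbound := (hF.insert_outer fun p hp => (harc p (mem_insert_of_mem hp)).2)
    |>.card_filter_le (fun p hp => (harc p hp).1) (show 0 < d - 1 by omega)
  rw [filter_true_of_mem fun p hp => ⟨Nat.zero_le _, (harc p hp).2⟩,
    card_insert_of_notMem hout] at hbound
  omega

section CompleteGraph

variable {d k : ℕ}

def chordEdge (p : ℕ × ℕ) (hp : p.1 < p.2 ∧ p.2 < d) : (completeGraph (Fin d)).edgeSet :=
  ⟨s(⟨p.1, hp.1.trans hp.2⟩, ⟨p.2, hp.2⟩), by simp [Fin.ext_iff]; omega⟩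

def chordPage (page : (completeGraph (Fin d)).edgeSet → Option (Fin k)) (p : ℕ × ℕ) :
    Option (Fin k) :=
  if hp : p.1 < p.2 ∧ p.2 < d then page (chordEdge p hp) else none

lemma chordPage_of_lt {page : (completeGraph (Fin d)).edgeSet → Option (Fin k)} {p : ℕ × ℕ}
    (hp : p.1 < p.2 ∧ p.2 < d) : chordPage page p = page (chordEdge p hp) :=
  dif_pos hp

variable {f : Fin d → ℕ} {page : (completeGraph (Fin d)).edgeSet → Option (Fin k)}

lemma IsBookEmbedding.chordPage_ne_none (h : IsBookEmbedding _ f page) (hf : StrictMono f)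
    {p : ℕ × ℕ} (hp : p.1 + 2 ≤ p.2) (hpd : p.2 < d) : chordPage page p ≠ none := by
  rw [chordPage_of_lt ⟨by omega, hpd⟩]
  intro hnone
  obtain ⟨a, b, hab, hlt, hgap⟩ := h.spine_edge _ hnone
  rcases Sym2.eq_iff.mp hab with ⟨rfl, rfl⟩ | ⟨rfl, rfl⟩
  · exact hgap ⟨p.1 + 1, by omega⟩
      ⟨hf (by simp [Fin.lt_def]), hf (by simp [Fin.lt_def]; omega)⟩
  · exact (hf (by simp [Fin.lt_def]; omega)).asymm hlt

lemma IsBookEmbedding.noncrossing_chordPage (h : IsBookEmbedding _ f page) (hf : StrictMono f)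
    (r : Fin k) : Noncrossing {p ∈ chords d | chordPage page p = some r} := by
  intro p hp q hq hcross
  simp only [chords, mem_filter, mem_product, mem_range] at hp hq
  obtain ⟨⟨⟨-, hpd⟩, hplong⟩, hpr⟩ := hp
  obtain ⟨⟨⟨-, hqd⟩, hqlong⟩, hqr⟩ := hq
  rw [chordPage_of_lt ⟨by omega, hpd⟩] at hpr
  rw [chordPage_of_lt ⟨by omega, hqd⟩] at hqr
  refine h.noncrossing _ _ (by simp [hpr]) (hpr.trans hqr.symm) ?_
  exact ⟨_, _, _, _, rfl, rfl, hf (Fin.mk_lt_mk.mpr hcross.1), hf (Fin.mk_lt_mk.mpr hcross.2.1),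
    hf (Fin.mk_lt_mk.mpr hcross.2.2)⟩

lemma IsBookEmbedding.le_two_mul_of_strictMono (h : IsBookEmbedding _ f page) (hf : StrictMono f)
    (hd : 4 ≤ d) : d ≤ 2 * k := by
  set C := (chords d).erase (0, d - 1)
  have hpages : #C ≤ k * (d - 3) := by
    have hnone : {p ∈ C | chordPage page p = none} = ∅ := filter_eq_empty_iff.mpr fun p hp => by
      simp only [C, chords, mem_erase, mem_filter, mem_product, mem_range] at hp
      exact h.chordPage_ne_none hf hp.2.2 hp.2.1.2
    have hsome (r : Fin k) : #{p ∈ C | chordPage page p = some r} ≤ d - 3 := by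
      rw [filter_erase]
      exact card_le_of_noncrossing_of_subset_chords
        ((h.noncrossing_chordPage hf r).mono (erase_subset _ _))
        (erase_subset_erase _ (filter_subset _ _))
    rw [card_eq_sum_card_fiberwise (f := chordPage page) (t := univ) fun _ _ => mem_univ _,
      Fintype.sum_option, hnone, card_empty, zero_add]
    exact (sum_le_sum fun r _ => hsome r).trans (by simp)
  have hcount : 2 * (#C + 1) = (d - 1) * (d - 2) := by
    rw [card_erase_add_one (by simp [chords]; omega), two_mul_card_chords]
  obtain ⟨m, rfl⟩ : ∃ m, d = m + 4 := ⟨d - 4, by omega⟩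
  simp only [show m + 4 - 1 = m + 3 by omega, show m + 4 - 2 = m + 2 by omega,
    show m + 4 - 3 = m + 1 by omega] at hcount hpages
  nlinarith

lemma HasBookEmbedding.le_two_mul_of_completeGraph
    (h : HasBookEmbedding (completeGraph (Fin d)) k) (hd : 4 ≤ d) : d ≤ 2 * k := by
  obtain ⟨f, page, hfp⟩ := hasBookEmbedding_iff.mp h
  have hsorted := hfp.comap (Iso.completeGraph (Tuple.sort f)).toCopy
  exact hsorted.le_two_mul_of_strictMono
    ((Tuple.monotone_sort f).strictMono_of_injective hsorted.injective) hd

end CompleteGraph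

section CompleteExpansion

variable {V : Type*} (G : SimpleGraph V) (v : V)

def incidenceAt (u : G.neighborSet v) : IncidencePair G :=
  ⟨(v, s(v, u)), G.mem_edgeSet.mpr u.2, Sym2.mem_mk_left v u⟩

lemma incidenceAt_injective : Function.Injective (incidenceAt G v) := fun _ _ h =>
  Subtype.ext (Sym2.congr_right.mp (congrArg (fun x : IncidencePair G => x.1.2) h))

def starClique : Copy (completeGraph (G.neighborSet v)) (completeExpansion G) :=
  Hom.toCopy ⟨incidenceAt G v, fun huu' =>
    (fromRel_adj _ _ _).mpr ⟨(incidenceAt_injective G v).ne huu', Or.inl (Or.inl rfl)⟩⟩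
    (incidenceAt_injective G v)

lemma completeGraph_degree_isContained [Fintype (G.neighborSet v)] :
    completeGraph (Fin (G.degree v)) ⊑ completeExpansion G :=
  ⟨(starClique G v).comp
    (Iso.completeGraph (Fintype.equivFinOfCardEq (G.card_neighborSet_eq_degree v)).symm).toCopy⟩

end CompleteExpansion

theorem stmt6 {V : Type*} [Fintype V] (G : SimpleGraph V) [DecidableRel G.Adj]
    (hΔ : 4 ≤ G.maxDegree) :
    (G.maxDegree + 1) / 2 ≤ pageNumber (completeExpansion G) := by
  have : Nonempty V := by
    by_contra hV
    rw [not_nonempty_iff] at hV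
    rw [maxDegree_of_subsingleton] at hΔ
    omega
  obtain ⟨v, hv⟩ := G.exists_maximal_degree_vertex
  refine le_csInf (exists_hasBookEmbedding _) fun k hk => ?_
  have := (hk.mono (completeGraph_degree_isContained G v)).le_two_mul_of_completeGraph (hv ▸ hΔ)
  omega
end

section
/- Let T be a finite tree (a finite connected acyclic simple graph). Then pn(E_c(T)) ≤ ⌈Δ(T)/2⌉, where E_c denotes the complete expansion graph, Δ(T) is the maximum degree of T, and pn denotes the pagenumber. -/
open SimpleGraph

/-!
Root the tree at `r`, order each vertex by its path from `r` (lexicographically, which is a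
depth-first preorder) and write `ρ` for the resulting rank. The incidence pair `(v, e)` is put
at spine position `2ρ(c) + 1` if `v` is the endpoint `c` of `e` farther from `r`, and at `2ρ(c)`
otherwise. Then the two incidence pairs of an edge are consecutive, so the matching edges of
`E_c(T)` cross nothing; and all pairs at `v` lie within the block of positions of the subtree
of `v`, so the cliques of two distinct vertices never interleave. Each clique is a `K_d` with
`d ≤ Δ(T)` and goes into `⌈d/2⌉` pages by the classical cyclic page assignment.
-/

open SimpleGraph Finset Function

/-- `(i + j) % d / 2` is the page of the chord `{i, j}` in the standard `⌈d/2⌉`-page book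
embedding of `K_d`. -/
theorem Nat.mod_div_two_ne_of_interleaved {d i k j l : ℕ} (hik : i < k) (hkj : k < j)
    (hjl : j < l) (hld : l < d) : (i + j) % d / 2 ≠ (k + l) % d / 2 := by
  have reduce : ∀ n < 2 * d, n % d = n ∨ n % d + d = n := fun n hn => by
    rcases lt_or_ge n d with h | h
    · exact Or.inl (Nat.mod_eq_of_lt h)
    · right
      rw [Nat.mod_eq_sub_mod h, Nat.mod_eq_of_lt (by omega)]
      omega
  rcases reduce (i + j) (by omega) with h | h <;>
    rcases reduce (k + l) (by omega) with h' | h' <;> omega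

theorem List.lt_concat_self {α : Type*} [LinearOrder α] (l : List α) (a : α) : l < l ++ [a] := by
  simpa using List.append_left_lt (l₁ := l) (List.nil_lt_cons a [])

theorem List.IsPrefix.of_not_lt_of_not_lt {α : Type*} [LinearOrder α] :
    ∀ {p b c : List α}, p <+: c → ¬ b < p → ¬ c < b → p <+: b
  | [], _, _, _, _, _ => List.nil_prefix
  | a :: p, [], _, _, hbp, _ => absurd (List.nil_lt_cons a p) hbp
  | a :: p, x :: b, _, ⟨t, rfl⟩, hbp, hcb => by
    simp only [List.cons_append, List.cons_lt_cons_iff, not_or, not_and] at hbp hcb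
    obtain rfl : x = a := le_antisymm (not_lt.1 hcb.1) (not_lt.1 hbp.1)
    exact (List.prefix_cons_inj x).2
      ((List.prefix_append p t).of_not_lt_of_not_lt (hbp.2 rfl) (hcb.2 rfl))

section Rank

variable {β α : Type*} [LinearOrder α]

def rankIn (s : Finset β) (f : β → α) (x : β) : ℕ := #{y ∈ s | f y < f x}

variable {s : Finset β} {f : β → α} {x y : β}

theorem rankIn_lt_rankIn (hx : x ∈ s) (h : f x < f y) : rankIn s f x < rankIn s f y :=
  card_lt_card <| (ssubset_iff_of_subset (monotone_filter_right s fun _ _ hz => hz.trans h)).2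
    ⟨x, by simp [hx, h], by simp⟩

theorem rankIn_lt_card (hx : x ∈ s) : rankIn s f x < #s :=
  card_lt_card ⟨filter_subset _ _, fun hsub => by simpa using hsub hx⟩

theorem rankIn_injOn (hf : Set.InjOn f s) : Set.InjOn (rankIn s f) s := by
  intro x hx y hy h
  by_contra hne
  rcases lt_or_gt_of_ne fun e => hne (hf hx hy e) with h' | h'
  · exact (rankIn_lt_rankIn hx h').ne h
  · exact (rankIn_lt_rankIn hy h').ne' h

end Rank

section CompleteExpansion

variable {V : Type*} {G : SimpleGraph V}

theorem completeExpansion_adj {x y : IncidencePair G} :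
    (completeExpansion G).Adj x y ↔ x ≠ y ∧ (x.1.1 = y.1.1 ∨ x.1.2 = y.1.2) := by
  simp only [completeExpansion, fromRel_adj, eq_comm (a := y.1.1), eq_comm (a := y.1.2)]
  tauto

structure IsExpansionSpine (G : SimpleGraph V) (f : IncidencePair G → ℕ) : Prop where
  injective : Injective f
  consecutive_of_edge_eq {x y : IncidencePair G} :
    x.1.2 = y.1.2 → x ≠ y → f y = f x + 1 ∨ f x = f y + 1
  not_interleaved {a b c d : IncidencePair G} :
    a.1.1 = b.1.1 → c.1.1 = d.1.1 → a.1.1 ≠ c.1.1 → ¬ (f a < f c ∧ f c < f b ∧ f b < f d)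

variable [Fintype V]

noncomputable instance : Fintype (IncidencePair G) := Fintype.ofFinite _

open Classical in
noncomputable def cliqueAt (G : SimpleGraph V) (v : V) : Finset (IncidencePair G) :=
  {x | x.1.1 = v}

@[simp]
theorem mem_cliqueAt {v : V} {x : IncidencePair G} : x ∈ cliqueAt G v ↔ x.1.1 = v := by
  simp [cliqueAt]

variable [DecidableRel G.Adj]

theorem card_cliqueAt (v : V) : #(cliqueAt G v) = G.degree v := by
  classical
  rw [← card_incidenceFinset_eq_degree]
  refine card_bij (fun x _ => x.1.2) (fun x hx => ?_) (fun x hx y hy h => ?_) fun e he => ?_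
  · rw [mem_cliqueAt] at hx
    exact (mem_incidenceFinset _ _ _).2 ⟨x.2.1, hx ▸ x.2.2⟩
  · exact Subtype.ext (Prod.ext ((mem_cliqueAt.1 hx).trans (mem_cliqueAt.1 hy).symm) h)
  · rw [mem_incidenceFinset] at he
    exact ⟨⟨(v, e), he⟩, mem_cliqueAt.2 rfl, rfl⟩

/-- On an edge of a clique both degrees are that of the common vertex; the `max` only makes the
formula symmetric. -/
noncomputable def cliquePage (f : IncidencePair G → ℕ) : Sym2 (IncidencePair G) → ℕ :=
  Sym2.lift ⟨fun x y => (rankIn (cliqueAt G x.1.1) f x + rankIn (cliqueAt G y.1.1) f y) %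
    max (G.degree x.1.1) (G.degree y.1.1) / 2, fun x y => by dsimp only; rw [add_comm, max_comm]⟩

theorem cliquePage_lt (f : IncidencePair G → ℕ) (e : Sym2 (IncidencePair G)) :
    cliquePage f e < (G.maxDegree + 1) / 2 := by
  induction e using Sym2.ind with
  | _ x y =>
    have hpos : 0 < G.degree x.1.1 := card_cliqueAt (G := G) x.1.1 ▸ card_pos.2 ⟨x, by simp⟩
    have hmod := Nat.mod_lt (rankIn (cliqueAt G x.1.1) f x + rankIn (cliqueAt G y.1.1) f y)
      (lt_max_of_lt_left (c := G.degree y.1.1) hpos)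
    have hmax := max_le (G.degree_le_maxDegree x.1.1) (G.degree_le_maxDegree y.1.1)
    simp only [cliquePage, Sym2.lift_mk]
    omega

theorem cliquePage_mk_of_eq (f : IncidencePair G → ℕ) {x y : IncidencePair G} {v : V}
    (hx : x.1.1 = v) (hy : y.1.1 = v) :
    cliquePage f s(x, y) =
      (rankIn (cliqueAt G v) f x + rankIn (cliqueAt G v) f y) % #(cliqueAt G v) / 2 := by
  simp only [cliquePage, Sym2.lift_mk]
  rw [hx, hy, max_self, card_cliqueAt]

theorem IsExpansionSpine.hasBookEmbedding {f : IncidencePair G → ℕ}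
    (hf : IsExpansionSpine G f) :
    HasBookEmbedding (completeExpansion G) ((G.maxDegree + 1) / 2) := by
  refine ⟨f, fun e => some ⟨cliquePage f e, cliquePage_lt f e⟩, hf.injective,
    fun _ h => (Option.some_ne_none _ h).elim, ?_⟩
  rintro ⟨_, hab⟩ ⟨_, hcd⟩ - hpage ⟨a, b, c, d, rfl, rfl, hac, hcb, hbd⟩
  simp only [Option.some.injEq, Fin.mk.injEq] at hpage
  rw [mem_edgeSet, completeExpansion_adj] at hab hcd
  obtain ⟨hab, hvab | heab⟩ := hab
  swap
  · rcases hf.consecutive_of_edge_eq heab hab with h | h <;> omega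
  obtain ⟨hcd, hvcd | hecd⟩ := hcd
  swap
  · rcases hf.consecutive_of_edge_eq hecd hcd with h | h <;> omega
  by_cases hvac : a.1.1 = c.1.1
  · rw [cliquePage_mk_of_eq f rfl hvab.symm, cliquePage_mk_of_eq f hvac.symm (hvcd ▸ hvac.symm)]
      at hpage
    have mem {x : IncidencePair G} : x.1.1 = a.1.1 → x ∈ cliqueAt G a.1.1 := mem_cliqueAt.2
    exact Nat.mod_div_two_ne_of_interleaved (rankIn_lt_rankIn (mem rfl) hac)
      (rankIn_lt_rankIn (mem hvac.symm) hcb) (rankIn_lt_rankIn (mem hvab.symm) hbd)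
      (rankIn_lt_card (mem (hvcd ▸ hvac.symm))) hpage
  · exact hf.not_interleaved hvab hvcd hvac ⟨hac, hcb, hbd⟩

end CompleteExpansion

namespace SimpleGraph.IsTree

variable {V : Type*} {T : SimpleGraph V} (hT : T.IsTree) (r : V)

noncomputable def rootWalk (v : V) : T.Walk r v := (hT.existsUnique_path r v).exists.choose

theorem isPath_rootWalk (v : V) : (hT.rootWalk r v).IsPath :=
  (hT.existsUnique_path r v).exists.choose_spec

noncomputable def rootPath (v : V) : List V := (hT.rootWalk r v).support

theorem rootPath_injective : Injective (hT.rootPath r) := by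
  intro u v h
  rw [← (hT.rootWalk r u).getLast_support, ← (hT.rootWalk r v).getLast_support]
  simp only [rootPath] at h
  simp only [h]

theorem rootPath_of_adj {u v : V} (h : T.Adj u v) :
    hT.rootPath r v = hT.rootPath r u ++ [v] ∨ hT.rootPath r u = hT.rootPath r v ++ [u] := by
  have hu := hT.isPath_rootWalk r u
  have hv := hT.isPath_rootWalk r v
  unfold rootPath
  by_cases hmem : u ∈ (hT.rootWalk r v).support
  · left
    rw [hT.isAcyclic.path_concat hu hv h hmem, Walk.support_concat]
  · right
    have hmem' := hT.isAcyclic.mem_support_of_ne_mem_support_of_adj_of_isPath hu hv h hmem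
    rw [hT.isAcyclic.path_concat hv hu h.symm hmem', Walk.support_concat]

theorem exists_rootPath_eq_concat (x : IncidencePair T) :
    ∃ c p, x.1.2 = s(c, p) ∧ hT.rootPath r c = hT.rootPath r p ++ [c] := by
  have hadj : T.Adj x.1.1 (Sym2.Mem.other x.2.2) := by
    have h := x.2.1
    rwa [← Sym2.other_spec x.2.2, mem_edgeSet] at h
  rcases hT.rootPath_of_adj r hadj with h | h
  · exact ⟨_, _, (Sym2.other_spec x.2.2).symm.trans Sym2.eq_swap, h⟩
  · exact ⟨_, _, (Sym2.other_spec x.2.2).symm, h⟩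

variable [Fintype V] [LinearOrder V]

noncomputable def preorderRank (v : V) : ℕ := rankIn univ (hT.rootPath r) v

theorem preorderRank_injective : Injective (hT.preorderRank r) := fun u v h =>
  rankIn_injOn (hT.rootPath_injective r).injOn (mem_univ u) (mem_univ v) h

theorem preorderRank_lt_of_rootPath_lt {u v : V} (h : hT.rootPath r u < hT.rootPath r v) :
    hT.preorderRank r u < hT.preorderRank r v :=
  rankIn_lt_rankIn (mem_univ u) h

noncomputable def spinePos (x : IncidencePair T) : ℕ :=
  if (hT.rootPath r (Sym2.Mem.other x.2.2)).length < (hT.rootPath r x.1.1).length then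
    2 * hT.preorderRank r x.1.1 + 1
  else 2 * hT.preorderRank r (Sym2.Mem.other x.2.2)

theorem spinePos_of_rootPath_eq_concat {x : IncidencePair T} {c p : V} (he : x.1.2 = s(c, p))
    (hcp : hT.rootPath r c = hT.rootPath r p ++ [c]) :
    x.1.1 = c ∧ hT.spinePos r x = 2 * hT.preorderRank r c + 1 ∨
      x.1.1 = p ∧ x.1.1 ≠ c ∧ hT.spinePos r x = 2 * hT.preorderRank r c := by
  have hlen : (hT.rootPath r p).length < (hT.rootPath r c).length := by simp [hcp]
  have hne : p ≠ c := fun h => hlen.ne (congrArg List.length (congrArg (hT.rootPath r) h))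
  have hx : s(x.1.1, Sym2.Mem.other x.2.2) = s(c, p) := (Sym2.other_spec x.2.2).trans he
  unfold spinePos
  rcases Sym2.eq_iff.1 hx with ⟨h1, h2⟩ | ⟨h1, h2⟩
  · rw [h2, h1, if_pos hlen]
    exact Or.inl ⟨rfl, rfl⟩
  · rw [h2, h1, if_neg hlen.not_gt]
    exact Or.inr ⟨rfl, hne, rfl⟩

theorem spinePos_injective : Injective (hT.spinePos r) := by
  intro x y hxy
  obtain ⟨c, p, hx, hcp⟩ := hT.exists_rootPath_eq_concat r x
  obtain ⟨c', p', hy, hcp'⟩ := hT.exists_rootPath_eq_concat r y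
  have hposx := hT.spinePos_of_rootPath_eq_concat r hx hcp
  have hposy := hT.spinePos_of_rootPath_eq_concat r hy hcp'
  obtain rfl : c = c' := hT.preorderRank_injective r <| by
    rcases hposx with ⟨-, h⟩ | ⟨-, -, h⟩ <;> rcases hposy with ⟨-, h'⟩ | ⟨-, -, h'⟩ <;> omega
  obtain rfl : p = p' := hT.rootPath_injective r (List.append_cancel_right (hcp.symm.trans hcp'))
  refine Subtype.ext (Prod.ext ?_ (hx.trans hy.symm))
  rcases hposx with ⟨h, hpx⟩ | ⟨h, -, hpx⟩ <;> rcases hposy with ⟨h', hpy⟩ | ⟨h', -, hpy⟩ <;>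
    first | exact h.trans h'.symm | omega

theorem spinePos_consecutive_of_edge_eq {x y : IncidencePair T} (he : x.1.2 = y.1.2)
    (hne : x ≠ y) : hT.spinePos r y = hT.spinePos r x + 1 ∨
      hT.spinePos r x = hT.spinePos r y + 1 := by
  obtain ⟨c, p, hx, hcp⟩ := hT.exists_rootPath_eq_concat r x
  rcases hT.spinePos_of_rootPath_eq_concat r hx hcp with ⟨h, hpx⟩ | ⟨h, -, hpx⟩ <;>
    rcases hT.spinePos_of_rootPath_eq_concat r (he ▸ hx) hcp with ⟨h', hpy⟩ | ⟨h', -, hpy⟩ <;>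
    first | omega | exact absurd (Subtype.ext (Prod.ext (h.trans h'.symm) he)) hne

theorem two_mul_preorderRank_lt_spinePos (x : IncidencePair T) :
    2 * hT.preorderRank r x.1.1 < hT.spinePos r x := by
  obtain ⟨c, p, hx, hcp⟩ := hT.exists_rootPath_eq_concat r x
  have hpc := hT.preorderRank_lt_of_rootPath_lt r (hcp ▸ List.lt_concat_self _ c)
  rcases hT.spinePos_of_rootPath_eq_concat r hx hcp with ⟨h, hpos⟩ | ⟨h, -, hpos⟩ <;>
    rw [h, hpos] <;> omega

theorem exists_spinePos_le (x : IncidencePair T) :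
    ∃ c, hT.rootPath r x.1.1 <+: hT.rootPath r c ∧
      hT.spinePos r x ≤ 2 * hT.preorderRank r c + 1 := by
  obtain ⟨c, p, hx, hcp⟩ := hT.exists_rootPath_eq_concat r x
  rcases hT.spinePos_of_rootPath_eq_concat r hx hcp with ⟨h, hpos⟩ | ⟨h, -, hpos⟩
  · exact ⟨c, h ▸ List.prefix_refl _, hpos.le⟩
  · exact ⟨c, h ▸ hcp ▸ List.prefix_append _ _, by omega⟩

theorem rootPath_prefix_of_spinePos_between {x y z : IncidencePair T} (hxz : x.1.1 = z.1.1)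
    (hxy : hT.spinePos r x < hT.spinePos r y) (hyz : hT.spinePos r y < hT.spinePos r z) :
    hT.rootPath r x.1.1 <+: hT.rootPath r y.1.1 := by
  have hx := hT.two_mul_preorderRank_lt_spinePos r x
  obtain ⟨cz, hxcz, hz⟩ := hT.exists_spinePos_le r z
  rw [← hxz] at hxcz
  obtain ⟨c, p, hy, hcp⟩ := hT.exists_rootPath_eq_concat r y
  have hposy := hT.spinePos_of_rootPath_eq_concat r hy hcp
  have hlo : 2 * hT.preorderRank r c ≤ hT.spinePos r y ∧
      hT.spinePos r y ≤ 2 * hT.preorderRank r c + 1 := by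
    rcases hposy with ⟨-, h⟩ | ⟨-, -, h⟩ <;> omega
  -- in preorder, `c` lies between `x.1.1` and the vertex `cz` of its subtree
  have hxc : hT.rootPath r x.1.1 <+: hT.rootPath r c :=
    hxcz.of_not_lt_of_not_lt (fun h => by have := hT.preorderRank_lt_of_rootPath_lt r h; omega)
      (fun h => by have := hT.preorderRank_lt_of_rootPath_lt r h; omega)
  rcases hposy with ⟨h, -⟩ | ⟨h, -, hpos⟩
  · rwa [h]
  rw [h]
  rw [hcp] at hxc
  rcases List.prefix_concat_iff.1 hxc with h' | h'
  · rw [← hcp] at h'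
    rw [hT.rootPath_injective r h'] at hx
    omega
  · exact h'

theorem isExpansionSpine_spinePos : IsExpansionSpine T (hT.spinePos r) where
  injective := hT.spinePos_injective r
  consecutive_of_edge_eq := hT.spinePos_consecutive_of_edge_eq r
  not_interleaved {a b c d} hab hcd hac := by
    rintro ⟨h₁, h₂, h₃⟩
    have hac' := hT.rootPath_prefix_of_spinePos_between r hab h₁ h₂
    have hca := hT.rootPath_prefix_of_spinePos_between r hcd h₂ h₃
    rw [← hab] at hca
    exact hac (hT.rootPath_injective r
      (hac'.eq_of_length (le_antisymm hac'.length_le hca.length_le)))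

end SimpleGraph.IsTree

theorem SimpleGraph.IsTree.exists_isExpansionSpine {V : Type*} [Fintype V] {T : SimpleGraph V}
    (hT : T.IsTree) : ∃ f, IsExpansionSpine T f := by
  let : LinearOrder V := LinearOrder.lift' _ (Fintype.equivFin V).injective
  obtain ⟨r⟩ := hT.connected.nonempty
  exact ⟨_, hT.isExpansionSpine_spinePos r⟩

theorem stmt9 {V : Type*} [Fintype V] (T : SimpleGraph V) [DecidableRel T.Adj]
    (hT : T.IsTree) :
    pageNumber (completeExpansion T) ≤ (T.maxDegree + 1) / 2 := by
  obtain ⟨f, hf⟩ := hT.exists_isExpansionSpine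
  exact Nat.sInf_le hf.hasBookEmbedding
end

section
/- Let m ≥ 1 be a natural number and let K_{2m+1} be the complete graph on 2m+1 vertices. Then m ≤ pn(E_c(K_{2m+1})) ≤ m + 1, where E_c denotes the complete expansion graph and pn denotes the pagenumber. -/
open SimpleGraph

/-!
Lower bound: the `2m` incidence pairs at one vertex of `K_{2m+1}` form a clique of `E_c`; sorted
along the spine, the edges joining the `i`-th and `(i + m)`-th of them pairwise cross, so they need
`m` distinct pages. For `m = 1` these edges may lie on the spine; there one page is forced because
every vertex has degree `2`.

Upper bound: write `ω x` for the other endpoint of the edge of the pair `x = (v, e)` and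
`(ω x - v) mod n` for its offset, `n = 2m + 1`. Order the pairs by `v`, and within a block by
decreasing offset, and put the edge `{x, y}` on page `⌊((ω x + ω y) mod n) / 2⌋`. Two crossing edges
have sums differing mod `n` by at least `2` in both directions, so they never share a page.
-/

lemma Nat.mod_div_two_ne {n r s : ℕ} (h₁ : r + 2 ≤ s) (h₂ : s + 2 ≤ r + n) :
    r % n / 2 ≠ s % n / 2 := by
  obtain ⟨δ, rfl⟩ : ∃ δ, s = r + δ := ⟨s - r, by omega⟩
  have hr : r % n < n := Nat.mod_lt r (by omega)
  rw [← Nat.mod_add_mod r n δ]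
  rcases lt_or_ge (r % n + δ) n with h | h
  · rw [Nat.mod_eq_of_lt h]
    omega
  · rw [Nat.mod_eq_sub_mod h, Nat.mod_eq_of_lt (show r % n + δ - n < n by omega)]
    omega

lemma Nat.ModEq.mod_div_two_ne {n p q r s : ℕ} (hp : p ≡ r [MOD n]) (hq : q ≡ s [MOD n])
    (h₁ : r + 2 ≤ s) (h₂ : s + 2 ≤ r + n) : p % n / 2 ≠ q % n / 2 := by
  rw [hp, hq]
  exact Nat.mod_div_two_ne h₁ h₂

lemma Nat.mul_add_lt_mul_add_iff {n a b c d : ℕ} (hb : b < n) (hd : d < n) :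
    n * a + b < n * c + d ↔ a < c ∨ a = c ∧ b < d := by
  rcases lt_trichotomy a c with h | rfl | h
  · have := Nat.mul_le_mul_left n h
    rw [mul_add_one] at this
    omega
  · omega
  · have := Nat.mul_le_mul_left n h
    rw [mul_add_one] at this
    omega

namespace IncidencePair

variable {V : Type*} {G : SimpleGraph V}

def vertex (x : IncidencePair G) : V := x.1.1

noncomputable def other (x : IncidencePair G) : V := Sym2.Mem.other x.2.2

def ofAdj {v w : V} (h : G.Adj v w) : IncidencePair G := ⟨(v, s(v, w)), h, Sym2.mem_mk_left v w⟩

lemma mk_vertex_other (x : IncidencePair G) : s(x.vertex, x.other) = x.1.2 :=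
  Sym2.other_spec x.2.2

lemma other_ne_vertex (x : IncidencePair G) : x.other ≠ x.vertex :=
  Sym2.other_ne (G.not_isDiag_of_mem_edgeSet x.2.1) x.2.2

lemma adj_vertex_other (x : IncidencePair G) : G.Adj x.vertex x.other := by
  rw [← G.mem_edgeSet, mk_vertex_other]
  exact x.2.1

lemma ext_of_vertex_of_other {x y : IncidencePair G} (h₁ : x.vertex = y.vertex)
    (h₂ : x.other = y.other) : x = y := by
  refine Subtype.ext (Prod.ext h₁ ?_)
  rw [← mk_vertex_other x, ← mk_vertex_other y, h₁, h₂]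

@[simp] lemma vertex_ofAdj {v w : V} (h : G.Adj v w) : (ofAdj h).vertex = v := rfl

@[simp] lemma other_ofAdj {v w : V} (h : G.Adj v w) : (ofAdj h).other = w :=
  Sym2.congr_right.1 (mk_vertex_other (ofAdj h))

end IncidencePair

open IncidencePair

lemma completeExpansion_adj_iff {V : Type*} {G : SimpleGraph V} {x y : IncidencePair G} :
    (completeExpansion G).Adj x y ↔ x ≠ y ∧ (x.vertex = y.vertex ∨ x.1.2 = y.1.2) := by
  simp only [completeExpansion, fromRel_adj, vertex, eq_comm (a := y.1.1), eq_comm (a := y.1.2),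
    or_self]

lemma completeExpansion_adj_cases {V : Type*} {G : SimpleGraph V} {x y : IncidencePair G}
    (h : (completeExpansion G).Adj x y) :
    x.vertex = y.vertex ∨ x.vertex = y.other ∧ y.vertex = x.other := by
  rw [completeExpansion_adj_iff, ← mk_vertex_other x, ← mk_vertex_other y, Sym2.eq_iff] at h
  obtain ⟨hne, h | ⟨h₁, h₂⟩ | h⟩ := h
  · exact .inl h
  · exact absurd (ext_of_vertex_of_other h₁ h₂) hne
  · exact .inr ⟨h.1, h.2.symm⟩

section LowerBounds

variable {V : Type*} {G : SimpleGraph V} {k : ℕ}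

lemma not_between_of_spine_edge {f : V → ℕ} {x y : V}
    (h : ∃ a b : V, s(x, y) = s(a, b) ∧ f a < f b ∧ ∀ c : V, ¬(f a < f c ∧ f c < f b))
    (hxy : f x < f y) (c : V) : ¬(f x < f c ∧ f c < f y) := by
  obtain ⟨a, b, hab, hlt, hc⟩ := h
  rcases Sym2.eq_iff.1 hab with ⟨rfl, rfl⟩ | ⟨rfl, rfl⟩
  · exact hc c
  · omega

/-- The leftmost vertex has two neighbours to its right, and they cannot both be its successor
on the spine. -/
lemma pos_of_hasBookEmbedding [Finite V] [Nonempty V]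
    (hdeg : ∀ v, ∃ y z, y ≠ z ∧ G.Adj v y ∧ G.Adj v z) (hk : HasBookEmbedding G k) : 0 < k := by
  obtain ⟨f, page, hf, hspine, -⟩ := hk
  obtain ⟨x, hx⟩ := Finite.exists_min f
  obtain ⟨y, z, hyz, hy, hz⟩ := hdeg x
  have hxy : f x < f y := (hx y).lt_of_ne (hf.ne hy.ne)
  have hxz : f x < f z := (hx z).lt_of_ne (hf.ne hz.ne)
  by_contra hk0
  obtain rfl : k = 0 := by omega
  have hnone (e : G.edgeSet) : page e = none := by
    cases page e with
    | none => rfl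
    | some i => exact i.elim0
  have hy' := not_between_of_spine_edge (hspine ⟨s(x, y), hy⟩ (hnone _)) hxy
  have hz' := not_between_of_spine_edge (hspine ⟨s(x, z), hz⟩ (hnone _)) hxz
  rcases lt_or_gt_of_ne (hf.ne hyz) with h | h
  · exact hz' y ⟨hxy, h⟩
  · exact hy' z ⟨hxz, h⟩

/-- Sorting a `2m`-clique along the spine, the edges from its `i`-th to its `(i + m)`-th vertex
pairwise cross, and for `m ≥ 2` none of them joins two consecutive vertices of the spine. -/
lemma le_of_hasBookEmbedding_of_pairwise_adj {m : ℕ} (hm : 2 ≤ m) {p : Fin (2 * m) → V}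
    (hp : Pairwise fun i j => G.Adj (p i) (p j)) (hk : HasBookEmbedding G k) : m ≤ k := by
  obtain ⟨f, page, hf, hspine, hcross⟩ := hk
  obtain ⟨q, hq, hmono⟩ : ∃ q : Fin (2 * m) → V,
      (Pairwise fun i j => G.Adj (q i) (q j)) ∧ StrictMono (f ∘ q) := by
    have hinj : Function.Injective (f ∘ p) :=
      hf.comp fun i j h => by_contra fun hij => (hp hij).ne h
    exact ⟨p ∘ Tuple.sort (f ∘ p), fun i j hij => hp ((Tuple.sort _).injective.ne hij),
      (Tuple.monotone_sort _).strictMono_of_injective (hinj.comp (Tuple.sort _).injective)⟩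
  let E (i : Fin m) : G.edgeSet :=
    ⟨s(q ⟨i, by omega⟩, q ⟨i + m, by omega⟩), hq (by simp [Fin.ext_iff]; omega)⟩
  have hE {i j : Fin m} (hij : i < j) : edgesCross f (E i) (E j) :=
    ⟨_, _, _, _, rfl, rfl, hmono (Fin.mk_lt_mk.2 hij), hmono (Fin.mk_lt_mk.2 (by omega)),
      hmono (Fin.mk_lt_mk.2 (by omega))⟩
  have hsome (i : Fin m) : (page (E i)).isSome := by
    rw [Option.isSome_iff_ne_none]
    intro hnone
    exact not_between_of_spine_edge (hspine (E i) hnone) (hmono (Fin.mk_lt_mk.2 (by omega)))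
      (q ⟨i + 1, by omega⟩) ⟨hmono (Fin.mk_lt_mk.2 (by omega)), hmono (Fin.mk_lt_mk.2 (by omega))⟩
  have hinj : Function.Injective fun i => (page (E i)).get (hsome i) := by
    intro i j hij
    have hpage : page (E i) = page (E j) := Option.get_inj.1 hij
    by_contra hne
    rcases lt_or_gt_of_ne hne with h | h
    · exact hcross _ _ (hsome i) hpage (hE h)
    · exact hcross _ _ (hsome j) hpage.symm (hE h)
  simpa using Fintype.card_le_of_injective _ hinj

end LowerBounds

lemma completeExpansion_top_exists_adj_adj {n : ℕ} (hn : 2 < n)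
    (x : IncidencePair (⊤ : SimpleGraph (Fin n))) :
    ∃ y z, y ≠ z ∧ (completeExpansion ⊤).Adj x y ∧ (completeExpansion ⊤).Adj x z := by
  obtain ⟨u, hu, hu'⟩ := Fin.exists_ne_and_ne_of_two_lt x.vertex x.other hn
  refine ⟨ofAdj x.adj_vertex_other.symm, ofAdj ((top_adj _ _).2 hu.symm), fun h => ?_, ?_, ?_⟩
  · exact x.other_ne_vertex (by simpa using congrArg vertex h)
  · refine completeExpansion_adj_iff.2 ⟨fun h => x.other_ne_vertex ?_, .inr ?_⟩
    · simpa using (congrArg vertex h).symm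
    · rw [← mk_vertex_other, Sym2.eq_swap]
      rfl
  · refine completeExpansion_adj_iff.2 ⟨fun h => hu' ?_, .inl rfl⟩
    simpa using (congrArg other h).symm

lemma le_of_hasBookEmbedding_completeExpansion_top {m k : ℕ} (hm : 1 ≤ m)
    (hk : HasBookEmbedding (completeExpansion (⊤ : SimpleGraph (Fin (2 * m + 1)))) k) : m ≤ k := by
  rcases hm.eq_or_lt with rfl | hm
  · have : Nonempty (IncidencePair (⊤ : SimpleGraph (Fin (2 * 1 + 1)))) :=
      ⟨ofAdj ((top_adj (0 : Fin (2 * 1 + 1)) 1).2 (by decide))⟩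
    exact pos_of_hasBookEmbedding (completeExpansion_top_exists_adj_adj (by omega)) hk
  · refine le_of_hasBookEmbedding_of_pairwise_adj hm
      (p := fun j => ofAdj ((top_adj 0 j.succ).2 (Fin.succ_ne_zero j).symm)) (fun i j hij => ?_) hk
    refine completeExpansion_adj_iff.2 ⟨fun h => hij ?_, .inl rfl⟩
    simpa using congrArg other h

namespace IncidencePair

variable {n : ℕ} {x y : IncidencePair (⊤ : SimpleGraph (Fin n))}

/-- `Fin` subtraction wraps around: this is `(w - v) mod n` for `x = (v, {v, w})`. -/
noncomputable def offset (x : IncidencePair (⊤ : SimpleGraph (Fin n))) : ℕ :=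
  (x.other - x.vertex : Fin n)

lemma offset_of_vertex_lt (h : x.vertex < x.other) : x.offset = x.other - x.vertex :=
  Fin.coe_sub_iff_le.2 h.le

lemma offset_of_other_lt (h : x.other < x.vertex) : x.offset = n + x.other - x.vertex :=
  Fin.coe_sub_iff_lt.2 h

lemma offset_pos (x : IncidencePair (⊤ : SimpleGraph (Fin n))) : 0 < x.offset := by
  rcases lt_or_gt_of_ne x.other_ne_vertex with h | h
  · rw [offset_of_other_lt h]
    omega
  · rw [offset_of_vertex_lt h]
    omega

lemma offset_lt (x : IncidencePair (⊤ : SimpleGraph (Fin n))) : x.offset < n :=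
  Fin.is_lt _

lemma other_modEq (x : IncidencePair (⊤ : SimpleGraph (Fin n))) :
    (x.other : ℕ) ≡ x.vertex + x.offset [MOD n] := by
  rcases lt_or_gt_of_ne x.other_ne_vertex with h | h
  · rw [offset_of_other_lt h, show (x.vertex : ℕ) + (n + x.other - x.vertex) = x.other + n by omega]
    exact Nat.add_modEq_right.symm
  · rw [offset_of_vertex_lt h, show (x.vertex : ℕ) + (x.other - x.vertex) = x.other by omega]

lemma eq_of_vertex_eq_of_offset_eq (h₁ : x.vertex = y.vertex) (h₂ : x.offset = y.offset) :
    x = y := by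
  refine ext_of_vertex_of_other h₁ (Fin.ext (Nat.ModEq.eq_of_lt_of_lt ?_ x.other.2 y.other.2))
  exact x.other_modEq.trans (by rw [h₁, h₂]; exact y.other_modEq.symm)

lemma offset_eq_of_matching (hxy : x.vertex = y.other) (hyx : y.vertex = x.other)
    (h : x.vertex < y.vertex) :
    x.offset = y.vertex - x.vertex ∧ y.offset = n + x.vertex - y.vertex := by
  rw [offset_of_vertex_lt (hyx ▸ h), offset_of_other_lt (hxy ▸ h), hxy, hyx]
  exact ⟨rfl, rfl⟩

noncomputable def spinePos (x : IncidencePair (⊤ : SimpleGraph (Fin n))) : ℕ :=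
  n * x.vertex + (n - x.offset)

lemma spinePos_lt_spinePos_iff : x.spinePos < y.spinePos ↔
    (x.vertex : ℕ) < y.vertex ∨ (x.vertex : ℕ) = y.vertex ∧ y.offset < x.offset := by
  have := x.offset_pos; have := y.offset_pos; have := x.offset_lt; have := y.offset_lt
  rw [spinePos, spinePos, Nat.mul_add_lt_mul_add_iff (by omega) (by omega)]
  omega

lemma spinePos_injective : Function.Injective (spinePos (n := n)) := by
  intro x y h
  have hxy := (spinePos_lt_spinePos_iff (x := x) (y := y)).not.1 h.not_lt
  have hyx := (spinePos_lt_spinePos_iff (x := y) (y := x)).not.1 h.symm.not_lt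
  exact eq_of_vertex_eq_of_offset_eq (Fin.ext (by omega)) (by omega)

end IncidencePair

/-- In each of the four configurations (each edge lies inside a block or is a matching edge), the
sums of other endpoints of two crossing edges differ mod `n` by an amount in `[2, n - 2]`. -/
lemma other_add_other_mod_div_two_ne {n : ℕ} {a b c d : IncidencePair (⊤ : SimpleGraph (Fin n))}
    (hab : (completeExpansion ⊤).Adj a b) (hcd : (completeExpansion ⊤).Adj c d)
    (h₁ : a.spinePos < c.spinePos) (h₂ : c.spinePos < b.spinePos) (h₃ : b.spinePos < d.spinePos) :
    ((a.other : ℕ) + b.other) % n / 2 ≠ ((c.other : ℕ) + d.other) % n / 2 := by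
  rw [spinePos_lt_spinePos_iff] at h₁ h₂ h₃
  have := a.offset_pos; have := b.offset_pos; have := c.offset_pos; have := d.offset_pos
  have := a.offset_lt; have := b.offset_lt; have := c.offset_lt; have := d.offset_lt
  rcases completeExpansion_adj_cases hab with hab | ⟨hab, hba⟩ <;>
    rcases completeExpansion_adj_cases hcd with hcd | ⟨hcd, hdc⟩
  · exact (Nat.ModEq.mod_div_two_ne (c.other_modEq.add d.other_modEq)
      (a.other_modEq.add b.other_modEq) (by omega) (by omega)).symm
  · have := c.other_ne_vertex
    exact (Nat.ModEq.mod_div_two_ne (c.other_modEq.add (.refl d.other))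
      (a.other_modEq.add b.other_modEq) (by omega) (by omega)).symm
  · exact Nat.ModEq.mod_div_two_ne ((Nat.ModEq.refl a.other).add b.other_modEq)
      (c.other_modEq.add d.other_modEq) (by omega) (by omega)
  · have := b.other_ne_vertex; have := d.other_ne_vertex
    obtain ⟨ha, hb⟩ := offset_eq_of_matching hab hba (by omega)
    obtain ⟨hc, hd⟩ := offset_eq_of_matching hcd hdc (by omega)
    exact Nat.mod_div_two_ne (by omega) (by omega)

/-- For a matching edge `(v, e) — (w, e)` the sum of other endpoints is `v + w`. -/
noncomputable def cyclicPage (m : ℕ) (x y : IncidencePair (⊤ : SimpleGraph (Fin (2 * m + 1)))) :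
    Fin (m + 1) :=
  ⟨((x.other : ℕ) + y.other) % (2 * m + 1) / 2, by
    have := Nat.mod_lt ((x.other : ℕ) + y.other) (show 0 < 2 * m + 1 by omega)
    omega⟩

theorem hasBookEmbedding_completeExpansion_top (m : ℕ) :
    HasBookEmbedding (completeExpansion (⊤ : SimpleGraph (Fin (2 * m + 1)))) (m + 1) := by
  refine ⟨spinePos, fun e => some (Sym2.lift ⟨cyclicPage m, fun x y => ?_⟩ e),
    spinePos_injective, fun e he => by simp at he, ?_⟩
  · simp only [cyclicPage, Nat.add_comm]
  rintro ⟨e, he⟩ ⟨e', he'⟩ - hpage ⟨a, b, c, d, rfl, rfl, h₁, h₂, h₃⟩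
  simp only [Sym2.lift_mk, Option.some.injEq, cyclicPage, Fin.mk.injEq] at hpage
  exact other_add_other_mod_div_two_ne he he' h₁ h₂ h₃ hpage

theorem stmt14 (m : ℕ) (hm : 1 ≤ m) :
    m ≤ pageNumber (completeExpansion (⊤ : SimpleGraph (Fin (2 * m + 1)))) ∧
    pageNumber (completeExpansion (⊤ : SimpleGraph (Fin (2 * m + 1)))) ≤ m + 1 := by
  have hup := hasBookEmbedding_completeExpansion_top m
  exact ⟨le_csInf ⟨_, hup⟩ fun _ hk => le_of_hasBookEmbedding_completeExpansion_top hm hk,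
    Nat.sInf_le hup⟩
end

section
/- Let n ≥ 2 be a natural number and let P_n be the path graph on n vertices. Then the complete expansion graph E_c(P_n) is isomorphic to the path graph on 2(n-1) vertices; consequently pn(E_c(P_n)) = pn(P_n) = 0, where pn denotes the pagenumber. -/
open SimpleGraph

/-! Listing the incidence pairs of `P_n` as `(0, 01), (1, 01), (1, 12), (2, 12), …`, consecutive
pairs alternately share their edge and their vertex, and no other two pairs share either; so this
listing is a path on `2(n - 1)` vertices. A path has a book embedding with no pages at all: on the
spine in its own order every edge joins consecutive vertices. -/

lemma edgesCross_map_of_comp {V W : Type*} (φ : V → W) (f : W → ℕ) {e e' : Sym2 V}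
    (h : edgesCross (f ∘ φ) e e') : edgesCross f (e.map φ) (e'.map φ) := by
  obtain ⟨a, b, c, d, rfl, rfl, hac, hcb, hbd⟩ := h
  exact ⟨φ a, φ b, φ c, φ d, rfl, rfl, hac, hcb, hbd⟩

lemma HasBookEmbedding.of_iso {V W : Type*} {G : SimpleGraph V} {H : SimpleGraph W} {k : ℕ}
    (φ : G ≃g H) (h : HasBookEmbedding H k) : HasBookEmbedding G k := by
  obtain ⟨f, page, hinj, hspine, hcross⟩ := h
  refine ⟨f ∘ φ, page ∘ φ.mapEdgeSet, hinj.comp φ.injective, ?_, ?_⟩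
  · intro e he
    obtain ⟨a, b, hab, hfab, hbet⟩ := hspine _ he
    have hab' : (e : Sym2 V) = s(φ.symm a, φ.symm b) := by
      simpa [Sym2.map_map] using congrArg (Sym2.map φ.symm) hab
    exact ⟨φ.symm a, φ.symm b, hab', by simpa using hfab, fun c => by simpa using hbet (φ c)⟩
  · intro e e' hsome hpage hcr
    exact hcross _ _ hsome hpage (edgesCross_map_of_comp φ f hcr)

lemma pageNumber_congr {V W : Type*} {G : SimpleGraph V} {H : SimpleGraph W} (φ : G ≃g H) :
    pageNumber G = pageNumber H := by
  unfold pageNumber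
  congr 1
  ext k
  exact ⟨HasBookEmbedding.of_iso φ.symm, HasBookEmbedding.of_iso φ⟩

lemma hasBookEmbedding_pathGraph_zero (m : ℕ) : HasBookEmbedding (pathGraph m) 0 := by
  refine ⟨Fin.val, fun _ => none, Fin.val_injective, ?_, fun _ _ hsome => by simp at hsome⟩
  rintro ⟨e, he⟩ -
  induction e using Sym2.ind with
  | _ u v =>
    rw [mem_edgeSet, pathGraph_adj] at he
    rcases he with h | h
    · exact ⟨u, v, rfl, by omega, fun c => by omega⟩
    · exact ⟨v, u, Sym2.eq_swap, by omega, fun c => by omega⟩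

lemma pageNumber_pathGraph (m : ℕ) : pageNumber (pathGraph m) = 0 :=
  Nat.sInf_eq_zero.mpr (Or.inl (hasBookEmbedding_pathGraph_zero m))

lemma exists_eq_pathGraph_edge {n : ℕ} {e : Sym2 (Fin n)} (he : e ∈ (pathGraph n).edgeSet) :
    ∃ (i : ℕ) (h : i + 1 < n), e = s(⟨i, by omega⟩, ⟨i + 1, h⟩) := by
  induction e using Sym2.ind with
  | _ u v =>
    rw [mem_edgeSet, pathGraph_adj] at he
    rcases he with h | h
    · exact ⟨u, by omega, Sym2.eq_iff.mpr (Or.inl ⟨rfl, Fin.ext h.symm⟩)⟩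
    · exact ⟨v, by omega, Sym2.eq_iff.mpr (Or.inr ⟨Fin.ext h.symm, rfl⟩)⟩

def pathIncidencePair (n : ℕ) (m : Fin (2 * (n - 1))) : IncidencePair (pathGraph n) :=
  ⟨(⟨m / 2 + m % 2, by omega⟩, s(⟨m / 2, by omega⟩, ⟨m / 2 + 1, by omega⟩)),
   pathGraph_adj.mpr (Or.inl rfl),
   by simp only [Sym2.mem_iff, Fin.mk.injEq]; omega⟩

lemma pathIncidencePair_injective (n : ℕ) : Function.Injective (pathIncidencePair n) := by
  intro m₁ m₂ h
  simp only [pathIncidencePair, Subtype.mk.injEq, Prod.mk.injEq, Fin.mk.injEq, Sym2.eq_iff] at h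
  omega

lemma pathIncidencePair_surjective (n : ℕ) : Function.Surjective (pathIncidencePair n) := by
  rintro ⟨⟨v, e⟩, he, hv⟩
  obtain ⟨i, hi, rfl⟩ := exists_eq_pathGraph_edge he
  rcases Sym2.mem_iff.mp hv with rfl | rfl
  · refine ⟨⟨2 * i, by omega⟩, Subtype.ext ?_⟩
    simp only [pathIncidencePair, Prod.mk.injEq, Sym2.eq_iff, Fin.mk.injEq]
    omega
  · refine ⟨⟨2 * i + 1, by omega⟩, Subtype.ext ?_⟩
    simp only [pathIncidencePair, Prod.mk.injEq, Sym2.eq_iff, Fin.mk.injEq]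
    omega

noncomputable def pathGraphIsoCompleteExpansion (n : ℕ) :
    pathGraph (2 * (n - 1)) ≃g completeExpansion (pathGraph n) where
  toEquiv := .ofBijective (pathIncidencePair n)
    ⟨pathIncidencePair_injective n, pathIncidencePair_surjective n⟩
  map_rel_iff' {m₁ m₂} := by
    change (completeExpansion _).Adj (pathIncidencePair n m₁) (pathIncidencePair n m₂) ↔ _
    rw [completeExpansion, fromRel_adj, pathGraph_adj, Ne, (pathIncidencePair_injective n).eq_iff]
    simp only [pathIncidencePair, Sym2.eq_iff, Fin.ext_iff]
    omega

theorem stmt17_general (n : ℕ) :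
    Nonempty (completeExpansion (pathGraph n) ≃g pathGraph (2 * (n - 1))) ∧
    pageNumber (completeExpansion (pathGraph n)) = 0 ∧
    pageNumber (pathGraph n) = 0 := by
  let φ := pathGraphIsoCompleteExpansion n
  refine ⟨⟨φ.symm⟩, ?_, pageNumber_pathGraph n⟩
  rw [← pageNumber_congr φ, pageNumber_pathGraph]

theorem stmt17 (n : ℕ) (hn : 2 ≤ n) :
    Nonempty (completeExpansion (pathGraph n) ≃g pathGraph (2 * (n - 1))) ∧
    pageNumber (completeExpansion (pathGraph n)) = 0 ∧
    pageNumber (pathGraph n) = 0 :=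
  stmt17_general n
end
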